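/- (Equation (8) of the paper, implicit differentiation as a fixed-point problem.) Let F : ℝⁿ × ℝᵖ → ℝⁿ be Fréchet differentiable, let x̂ : ℝᵖ → ℝⁿ be Fréchet differentiable with x̂(θ) = F(x̂(θ), θ) for all θ, and let ℓ : ℝⁿ → ℝ be Fréchet differentiable. Fix θ₀, let J be the partial Fréchet derivative of F in its first argument at (x̂(θ₀), θ₀) and ∂_θF the partial derivative in the second argument there, and assume id − J is invertible. Then the derivative of θ ↦ ℓ(x̂(θ)) at θ₀ equals β* ∘ ∂_θF, where β* is the unique linear functional on ℝⁿ satisfying β* = β* ∘ J + Dℓ(x̂(θ₀)). -/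

import Mathlib

/-!
Differentiating the fixed-point identity `x̂(θ) = F(x̂(θ), θ)` by the chain rule gives
`(id - J) ∘ Dx̂ = ∂θF`. A functional `β` satisfies `β = β ∘ J + Dℓ` exactly when
`β ∘ (id - J) = Dℓ`, which has the unique solution `Dℓ ∘ (id - J)⁻¹`; for any such `β`,
`β ∘ ∂θF = β ∘ (id - J) ∘ Dx̂ = Dℓ ∘ Dx̂`, the chain-rule derivative of `ℓ ∘ x̂`.
-/

open ContinuousLinearMap

section

variable {𝕜 : Type*} [NontriviallyNormedField 𝕜]
  {E : Type*} [NormedAddCommGroup E] [NormedSpace 𝕜 E]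
  {P : Type*} [NormedAddCommGroup P] [NormedSpace 𝕜 P]
  {G : Type*} [NormedAddCommGroup G] [NormedSpace 𝕜 G]

theorem HasFDerivAt.id_sub_comp_eq_of_fixedPoint {F : E × P → E} {x : P → E} {θ₀ : P}
    {J : E →L[𝕜] E} {B D : P →L[𝕜] E} (hfix : ∀ θ, x θ = F (x θ, θ))
    (hF : HasFDerivAt F (J.comp (fst 𝕜 E P) + B.comp (snd 𝕜 E P)) (x θ₀, θ₀))
    (hx : HasFDerivAt x D θ₀) :
    (ContinuousLinearMap.id 𝕜 E - J).comp D = B := by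
  have hFx : HasFDerivAt (fun θ => F (x θ, θ)) (J.comp D + B) θ₀ :=
    (hF.comp (f := fun θ => (x θ, θ)) θ₀ (hx.prodMk (hasFDerivAt_id θ₀))).congr_fderiv
      (by ext; simp)
  rw [← funext hfix] at hFx
  rw [sub_comp, id_comp, sub_eq_iff_eq_add']
  exact (hFx.unique hx).symm

theorem ContinuousLinearMap.eq_comp_add_iff_comp_id_sub_eq (β D : E →L[𝕜] G) (J : E →L[𝕜] E) :
    β = β.comp J + D ↔ β.comp (ContinuousLinearMap.id 𝕜 E - J) = D := by
  rw [comp_sub, comp_id, sub_eq_iff_eq_add, add_comm]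

theorem ContinuousLinearMap.existsUnique_comp_eq_of_inverse (A K : E →L[𝕜] E) (D : E →L[𝕜] G)
    (hAK : A.comp K = ContinuousLinearMap.id 𝕜 E) (hKA : K.comp A = ContinuousLinearMap.id 𝕜 E) :
    ∃! β : E →L[𝕜] G, β.comp A = D :=
  ⟨D.comp K, show (D.comp K).comp A = D by rw [comp_assoc, hKA, comp_id], fun β hβ => by
    rw [← hβ, comp_assoc, hAK, comp_id]⟩

end

/-- Equation (8) of the paper: the derivative of `θ ↦ ℓ(x̂(θ))` at `θ₀` equals
`β* ∘ ∂θF`, where `β*` is the unique linear functional satisfying the fixed-point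
equation `β* = β* ∘ J + Dℓ(x̂(θ₀))`. -/
theorem implicit_differentiation_as_fixed_point
    (n p : ℕ)
    (F : EuclideanSpace ℝ (Fin n) × EuclideanSpace ℝ (Fin p) → EuclideanSpace ℝ (Fin n))
    (xhat : EuclideanSpace ℝ (Fin p) → EuclideanSpace ℝ (Fin n))
    (hfix : ∀ θ, xhat θ = F (xhat θ, θ))
    (ℓ : EuclideanSpace ℝ (Fin n) → ℝ)
    (θ₀ : EuclideanSpace ℝ (Fin p))
    (J : EuclideanSpace ℝ (Fin n) →L[ℝ] EuclideanSpace ℝ (Fin n))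
    (dθF : EuclideanSpace ℝ (Fin p) →L[ℝ] EuclideanSpace ℝ (Fin n))
    (hF : HasFDerivAt F
      (J.comp (ContinuousLinearMap.fst ℝ (EuclideanSpace ℝ (Fin n)) (EuclideanSpace ℝ (Fin p))) +
        dθF.comp (ContinuousLinearMap.snd ℝ (EuclideanSpace ℝ (Fin n)) (EuclideanSpace ℝ (Fin p))))
      (xhat θ₀, θ₀))
    (Dxhat : EuclideanSpace ℝ (Fin p) →L[ℝ] EuclideanSpace ℝ (Fin n))
    (hxhat : HasFDerivAt xhat Dxhat θ₀)
    (Dℓ : EuclideanSpace ℝ (Fin n) →L[ℝ] ℝ)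
    (hℓ : HasFDerivAt ℓ Dℓ (xhat θ₀))
    (K : EuclideanSpace ℝ (Fin n) →L[ℝ] EuclideanSpace ℝ (Fin n))
    (hK₁ : (ContinuousLinearMap.id ℝ (EuclideanSpace ℝ (Fin n)) - J).comp K =
      ContinuousLinearMap.id ℝ (EuclideanSpace ℝ (Fin n)))
    (hK₂ : K.comp (ContinuousLinearMap.id ℝ (EuclideanSpace ℝ (Fin n)) - J) =
      ContinuousLinearMap.id ℝ (EuclideanSpace ℝ (Fin n))) :
    (∃! β : EuclideanSpace ℝ (Fin n) →L[ℝ] ℝ, β = β.comp J + Dℓ) ∧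
      ∀ β : EuclideanSpace ℝ (Fin n) →L[ℝ] ℝ, β = β.comp J + Dℓ →
        HasFDerivAt (fun θ => ℓ (xhat θ)) (β.comp dθF) θ₀ := by
  have hDxhat := hF.id_sub_comp_eq_of_fixedPoint hfix hxhat
  refine ⟨?_, fun β hβ => ?_⟩
  · simp only [eq_comp_add_iff_comp_id_sub_eq]
    exact existsUnique_comp_eq_of_inverse _ K Dℓ hK₁ hK₂
  · rw [← hDxhat, ← comp_assoc, (eq_comp_add_iff_comp_id_sub_eq β Dℓ J).1 hβ]
    exact hℓ.comp θ₀ hxhat
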